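/- For all integers n, m ≥ 2, γ_{2t}(K_n □ K_m) + 1 ≤ γ_{2t}(K_{n+1} □ K_{m+1}) ≤ γ_{2t}(K_n □ K_m) + 2. -/

import Mathlib

open SimpleGraph

/-- `S` is a total 2-dominating set of `G`: every vertex has at least 2 neighbors in `S`. -/
def TotalTwoDom {V : Type*} (G : SimpleGraph V) (S : Set V) : Prop :=
  ∀ v : V, 2 ≤ (S ∩ {u | G.Adj v u}).ncard

/-- The total 2-domination number of `G`. -/
noncomputable def gamma2t {V : Type*} [Fintype V] (G : SimpleGraph V) : ℕ :=
  sInf {k | ∃ S : Set V, TotalTwoDom G S ∧ S.ncard = k}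

/-- The complete graph on `n` vertices. -/
def K (n : ℕ) : SimpleGraph (Fin n) := ⊤

/-!
For a set `S` of cells of the `a × b` rook's graph `K a □ K b`, a cell sees `|row| + |col|` cells
of `S` on its row and column, minus `2` if it lies in `S` itself. So `S` is totally 2-dominating
iff the row and column through any cell together carry at least `2` cells of `S`, and at least `4`
through a cell of `S`.

Upper bound: extend a set on the `n × m` board by two cells on the new row or column. If every row
has two cells, put both new cells in the new row, in the two columns of one old row (and
symmetrically for columns). Otherwise some row and some column carry at most one cell; then every
line is nonempty, a cell of that row lies in a column with at least three cells and a cell of that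
column in a row with at least three, and the new cells go to the new row in that column and to the
new column in that row.

Lower bound: if `|S| > 2 min(n, m)`, two full lines of the small board are cheaper. Otherwise every
row of `S` is nonempty and some row is a single cell `(i₀, j₀)`. Delete row `i₀` and column `j₀`,
and move the other cells of column `j₀` into a column `j₁` that their rows do not meet; `j₁` exists
since otherwise `|S| ≥ n + m + 1`. This loses the cell `(i₀, j₀)`.
-/

open scoped Classical in
theorem Set.ncard_sdiff_singleton_add_ite {α : Type*} [Finite α] (s : Set α) (a : α) :
    (s \ {a}).ncard + (if a ∈ s then 1 else 0) = s.ncard := by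
  split_ifs with h
  · exact Set.ncard_sdiff_singleton_add_one h
  · rw [Set.sdiff_singleton_eq_self h, add_zero]

open scoped Classical in
theorem Fin.ncard_preimage_succAbove_add_ite {n : ℕ} (p : Fin (n + 1)) (s : Set (Fin (n + 1))) :
    (p.succAbove ⁻¹' s).ncard + (if p ∈ s then 1 else 0) = s.ncard := by
  rw [← Set.ncard_image_of_injective _ Fin.succAbove_right_injective,
    Set.image_preimage_eq_inter_range, Fin.range_succAbove, ← Set.sdiff_eq,
    Set.ncard_sdiff_singleton_add_ite]

theorem gamma2t_le {V : Type*} [Fintype V] {G : SimpleGraph V} {S : Set V}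
    (hS : TotalTwoDom G S) : gamma2t G ≤ S.ncard :=
  Nat.sInf_le ⟨S, hS, rfl⟩

theorem exists_totalTwoDom_ncard_eq_gamma2t {V : Type*} [Fintype V] {G : SimpleGraph V}
    (h : ∃ S, TotalTwoDom G S) : ∃ S, TotalTwoDom G S ∧ S.ncard = gamma2t G := by
  obtain ⟨S, hS⟩ := h
  exact Nat.sInf_mem (s := {k | ∃ S : Set V, TotalTwoDom G S ∧ S.ncard = k})
    ⟨S.ncard, S, hS, rfl⟩

namespace Rook

section Lines

variable {α β : Type*}

def row (S : Set (α × β)) (i : α) : Set β := {j | (i, j) ∈ S}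

def col (S : Set (α × β)) (j : β) : Set α := {i | (i, j) ∈ S}

theorem row_preimage_swap (S : Set (α × β)) : row (Prod.swap ⁻¹' S) = col S := rfl

theorem col_preimage_swap (S : Set (α × β)) : col (Prod.swap ⁻¹' S) = row S := rfl

theorem ncard_preimage_swap (S : Set (α × β)) : (Prod.swap ⁻¹' S).ncard = S.ncard :=
  Set.ncard_preimage_of_injective_subset_range Prod.swap_injective
    (Prod.swap_surjective.range_eq ▸ Set.subset_univ S)

theorem ncard_eq_sum_ncard_row [Fintype α] [Finite β] (S : Set (α × β)) :
    S.ncard = ∑ i, (row S i).ncard := by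
  let e : S ≃ Σ i, row S i :=
    { toFun := fun p => ⟨p.1.1, p.1.2, p.2⟩
      invFun := fun x => ⟨(x.1, x.2.1), x.2.2⟩
      left_inv := fun _ => rfl
      right_inv := fun _ => rfl }
  simp only [← Nat.card_coe_set_eq, Nat.card_congr e, Nat.card_sigma]

theorem ncard_eq_sum_ncard_col [Finite α] [Fintype β] (S : Set (α × β)) :
    S.ncard = ∑ j, (col S j).ncard := by
  rw [← ncard_preimage_swap, ncard_eq_sum_ncard_row, row_preimage_swap]

theorem mul_le_ncard_of_forall_le_ncard_row [Fintype α] [Finite β] {S : Set (α × β)} {d : ℕ}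
    (h : ∀ i, d ≤ (row S i).ncard) : Fintype.card α * d ≤ S.ncard := by
  rw [ncard_eq_sum_ncard_row, ← Finset.card_univ, ← smul_eq_mul]
  exact Finset.card_nsmul_le_sum _ _ _ fun i _ => h i

theorem mul_le_ncard_of_forall_le_ncard_col [Finite α] [Fintype β] {S : Set (α × β)} {d : ℕ}
    (h : ∀ j, d ≤ (col S j).ncard) : Fintype.card β * d ≤ S.ncard :=
  ncard_preimage_swap S ▸ mul_le_ncard_of_forall_le_ncard_row h

theorem ncard_row_le_of_image_subset {α' β' : Type*} [Finite β'] {f : α → α'} {g : β → β'}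
    {S : Set (α × β)} {S' : Set (α' × β')} (hg : Function.Injective g)
    (h : Prod.map f g '' S ⊆ S') (i : α) : (row S i).ncard ≤ (row S' (f i)).ncard := by
  rw [← Set.ncard_image_of_injective _ hg]
  exact Set.ncard_le_ncard fun _ ⟨j, hj, hgj⟩ => hgj ▸ h ⟨(i, j), hj, rfl⟩

theorem ncard_col_le_of_image_subset {α' β' : Type*} [Finite α'] {f : α → α'} {g : β → β'}
    {S : Set (α × β)} {S' : Set (α' × β')} (hf : Function.Injective f)
    (h : Prod.map f g '' S ⊆ S') (j : β) : (col S j).ncard ≤ (col S' (g j)).ncard := by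
  rw [← Set.ncard_image_of_injective _ hf]
  exact Set.ncard_le_ncard fun _ ⟨i, hi, hfi⟩ => hfi ▸ h ⟨(i, j), hi, rfl⟩

theorem ncard_inter_adj_boxProd [Finite α] [Finite β] (G : SimpleGraph α) (H : SimpleGraph β)
    (S : Set (α × β)) (v : α × β) :
    (S ∩ {u | (G □ H).Adj v u}).ncard
      = (row S v.1 ∩ H.neighborSet v.2).ncard + (col S v.2 ∩ G.neighborSet v.1).ncard := by
  have hsplit : S ∩ {u | (G □ H).Adj v u}
      = Prod.mk v.1 '' (row S v.1 ∩ H.neighborSet v.2)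
        ∪ (·, v.2) '' (col S v.2 ∩ G.neighborSet v.1) := by
    ext ⟨i, j⟩
    simp only [boxProd_adj, row, col, Set.mem_inter_iff, Set.mem_ofPred_eq, Set.mem_union,
      Set.mem_image, mem_neighborSet, Prod.mk.injEq]
    constructor
    · rintro ⟨hS, ⟨hG, rfl⟩ | ⟨hH, rfl⟩⟩
      · exact Or.inr ⟨i, ⟨hS, hG⟩, rfl, rfl⟩
      · exact Or.inl ⟨j, ⟨hS, hH⟩, rfl, rfl⟩
    · rintro (⟨j', ⟨hS, hH⟩, rfl, rfl⟩ | ⟨i', ⟨hS, hG⟩, rfl, rfl⟩)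
      · exact ⟨hS, Or.inr ⟨hH, rfl⟩⟩
      · exact ⟨hS, Or.inl ⟨hG, rfl⟩⟩
  have hdisj : Disjoint (Prod.mk v.1 '' (row S v.1 ∩ H.neighborSet v.2))
      ((·, v.2) '' (col S v.2 ∩ G.neighborSet v.1)) := by
    rw [Set.disjoint_left]
    rintro _ ⟨j, ⟨-, hH⟩, rfl⟩ ⟨i, -, hij⟩
    exact hH.ne (congrArg Prod.snd hij)
  rw [hsplit, Set.ncard_union_eq hdisj, Set.ncard_image_of_injective _ (Prod.mk_right_injective _),
    Set.ncard_image_of_injective _ (Prod.mk_left_injective _)]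

open scoped Classical in
theorem ncard_inter_adj_top_boxProd_top_add_ite [Finite α] [Finite β] (S : Set (α × β))
    (v : α × β) :
    (S ∩ {u | ((⊤ : SimpleGraph α) □ (⊤ : SimpleGraph β)).Adj v u}).ncard
      + (if v ∈ S then 2 else 0) = (row S v.1).ncard + (col S v.2).ncard := by
  have hrow := Set.ncard_sdiff_singleton_add_ite (row S v.1) v.2
  have hcol := Set.ncard_sdiff_singleton_add_ite (col S v.2) v.1
  have hmem_row : v.2 ∈ row S v.1 ↔ v ∈ S := Iff.rfl
  have hmem_col : v.1 ∈ col S v.2 ↔ v ∈ S := Iff.rfl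
  rw [ncard_inter_adj_boxProd, neighborSet_top, neighborSet_top, ← Set.sdiff_eq, ← Set.sdiff_eq]
  simp only [hmem_row, hmem_col] at hrow hcol
  split_ifs at hrow hcol ⊢ <;> omega

end Lines

section Board

variable {a b : ℕ} {S : Set (Fin a × Fin b)}

theorem totalTwoDom_iff :
    TotalTwoDom (K a □ K b) S ↔
      (∀ i j, 2 ≤ (row S i).ncard + (col S j).ncard) ∧
        ∀ i j, (i, j) ∈ S → 4 ≤ (row S i).ncard + (col S j).ncard := by
  classical
  have h (i : Fin a) (j : Fin b) : (S ∩ {u | (K a □ K b).Adj (i, j) u}).ncard + _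
      = (row S i).ncard + (col S j).ncard :=
    ncard_inter_adj_top_boxProd_top_add_ite S (i, j)
  refine ⟨fun hS => ⟨fun i j => ?_, fun i j hij => ?_⟩, fun ⟨h2, h4⟩ ⟨i, j⟩ => ?_⟩
  · have := hS (i, j)
    have := h i j
    split_ifs at this <;> omega
  · have := hS (i, j)
    have := h i j
    simp only [hij, if_true] at this
    omega
  · have := h i j
    have := h2 i j
    split_ifs at * with hij
    · have := h4 i j hij
      omega
    · omega

theorem totalTwoDom_preimage_swap_iff :
    TotalTwoDom (K b □ K a) (Prod.swap ⁻¹' S) ↔ TotalTwoDom (K a □ K b) S := by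
  simp only [totalTwoDom_iff, row_preimage_swap, col_preimage_swap]
  constructor <;> exact fun ⟨h2, h4⟩ =>
    ⟨fun i j => (h2 j i).trans_eq (add_comm _ _),
      fun i j hij => (h4 j i hij).trans_eq (add_comm _ _)⟩

theorem totalTwoDom_univ_prod (ha : 2 ≤ a) {J : Set (Fin b)} (hJ : 2 ≤ J.ncard) :
    TotalTwoDom (K a □ K b) (Set.univ ×ˢ J) := by
  have hrow (i) : row ((Set.univ : Set (Fin a)) ×ˢ J) i = J := by ext; simp [row]
  have hcol {j} (hj : j ∈ J) : col ((Set.univ : Set (Fin a)) ×ˢ J) j = Set.univ := by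
    ext; simp [col, hj]
  refine totalTwoDom_iff.2 ⟨fun i j => ?_, fun i j hij => ?_⟩
  · rw [hrow]
    omega
  · rw [hrow, hcol (Set.mem_prod.1 hij).2, Set.ncard_univ, Nat.card_fin]
    omega

theorem exists_totalTwoDom_ncard_eq (ha : 2 ≤ a) (hb : 2 ≤ b) :
    ∃ S : Set (Fin a × Fin b), TotalTwoDom (K a □ K b) S ∧ S.ncard = 2 * a := by
  obtain ⟨J, -, hJ⟩ := Set.exists_subset_card_eq (s := (Set.univ : Set (Fin b))) (n := 2)
    (by rwa [Set.ncard_univ, Nat.card_fin])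
  refine ⟨Set.univ ×ˢ J, totalTwoDom_univ_prod ha hJ.ge, ?_⟩
  rw [Set.ncard_prod, hJ, Set.ncard_univ, Nat.card_fin, mul_comm]

end Board

section Extension

variable {n m : ℕ} {S : Set (Fin n × Fin m)}

local notation "ι" => Prod.map Fin.castSucc Fin.castSucc

theorem castSucc_prodMap_injective : Function.Injective (ι : Fin n × Fin m → _) :=
  (Fin.castSucc_injective n).prodMap (Fin.castSucc_injective m)

theorem last_mk_notMem_range (j : Fin (m + 1)) :
    (Fin.last n, j) ∉ Set.range (ι : Fin n × Fin m → _) :=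
  fun ⟨v, hv⟩ => Fin.castSucc_ne_last v.1 (congrArg Prod.fst hv)

theorem mk_last_notMem_range (i : Fin (n + 1)) :
    (i, Fin.last m) ∉ Set.range (ι : Fin n × Fin m → _) :=
  fun ⟨v, hv⟩ => Fin.castSucc_ne_last v.2 (congrArg Prod.snd hv)

theorem totalTwoDom_extension {p q : Fin (n + 1) × Fin (m + 1)}
    {S' : Set (Fin (n + 1) × Fin (m + 1))}
    (hS' : S' = ι '' S ∪ {p, q}) (hS : TotalTwoDom (K n □ K m) S)
    (hp : p ∉ Set.range ι) (hq : q ∉ Set.range ι)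
    (h2 : ∀ i j, (i, j) ∉ Set.range ι → 2 ≤ (row S' i).ncard + (col S' j).ncard)
    (h4p : 4 ≤ (row S' p.1).ncard + (col S' p.2).ncard)
    (h4q : 4 ≤ (row S' q.1).ncard + (col S' q.2).ncard) :
    TotalTwoDom (K (n + 1) □ K (m + 1)) S' ∧ S'.ncard ≤ S.ncard + 2 := by
  obtain ⟨hS2, hS4⟩ := totalTwoDom_iff.1 hS
  have hsub : ι '' S ⊆ S' := hS' ▸ Set.subset_union_left
  have hrow := ncard_row_le_of_image_subset (Fin.castSucc_injective m) hsub
  have hcol := ncard_col_le_of_image_subset (Fin.castSucc_injective n) hsub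
  refine ⟨totalTwoDom_iff.2 ⟨fun i j => ?_, fun i j hij => ?_⟩, ?_⟩
  · by_cases hv : (i, j) ∈ Set.range ι
    · obtain ⟨⟨i, j⟩, hv⟩ := hv
      cases hv
      exact (hS2 i j).trans (add_le_add (hrow i) (hcol j))
    · exact h2 i j hv
  · rw [hS'] at hij
    rcases hij with ⟨⟨i, j⟩, hij, hv⟩ | hv | hv <;> cases hv
    · exact (hS4 i j hij).trans (add_le_add (hrow i) (hcol j))
    · exact h4p
    · exact h4q
  · calc S'.ncard ≤ (ι '' S).ncard + ({p, q} : Set _).ncard := hS' ▸ Set.ncard_union_le _ _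
      _ ≤ S.ncard + 2 := by
        rw [Set.ncard_image_of_injective _ castSucc_prodMap_injective]
        have := Set.ncard_insert_le p {q}
        rw [Set.ncard_singleton] at this
        omega

theorem exists_extension_of_forall_two_le_ncard_row (hn : 0 < n)
    (hS : TotalTwoDom (K n □ K m) S) (hrow : ∀ i, 2 ≤ (row S i).ncard) :
    ∃ S' : Set (Fin (n + 1) × Fin (m + 1)),
      TotalTwoDom (K (n + 1) □ K (m + 1)) S' ∧ S'.ncard ≤ S.ncard + 2 := by
  let i₀ : Fin n := ⟨0, hn⟩
  obtain ⟨j, hj, j', hj', hjj'⟩ := (Set.one_lt_ncard (Set.toFinite _)).1 (hrow i₀)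
  set S' := ι '' S ∪ {(Fin.last n, j.castSucc), (Fin.last n, j'.castSucc)} with hS'
  have hsub : ι '' S ⊆ S' := Set.subset_union_left
  have hlast : 2 ≤ (row S' (Fin.last n)).ncard :=
    (Set.one_lt_ncard (Set.toFinite _)).2 ⟨_, Or.inr (Or.inl rfl), _, Or.inr (Or.inr rfl),
      (Fin.castSucc_injective m).ne hjj'⟩
  have hrow' (i : Fin (n + 1)) : 2 ≤ (row S' i).ncard :=
    Fin.lastCases hlast (fun i => (hrow i).trans (ncard_row_le_of_image_subset
      (Fin.castSucc_injective m) hsub i)) i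
  have hcol' {k : Fin m} (hk : k ∈ row S i₀) (hk' : (Fin.last n, k.castSucc) ∈ S') :
      2 ≤ (col S' k.castSucc).ncard :=
    (Set.one_lt_ncard (Set.toFinite _)).2
      ⟨_, Or.inl ⟨(i₀, k), hk, rfl⟩, _, hk', Fin.castSucc_ne_last i₀⟩
  exact ⟨S', totalTwoDom_extension hS' hS (last_mk_notMem_range _)
    (last_mk_notMem_range _) (fun i _ _ => (hrow' i).trans (Nat.le_add_right _ _))
    (Nat.add_le_add hlast (hcol' hj (Or.inr (Or.inl rfl))))
    (Nat.add_le_add hlast (hcol' hj' (Or.inr (Or.inr rfl))))⟩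

theorem exists_extension_of_ncard_row_le_one_of_ncard_col_le_one
    (hS : TotalTwoDom (K n □ K m) S) {i : Fin n} {j : Fin m} (hi : (row S i).ncard ≤ 1)
    (hj : (col S j).ncard ≤ 1) :
    ∃ S' : Set (Fin (n + 1) × Fin (m + 1)),
      TotalTwoDom (K (n + 1) □ K (m + 1)) S' ∧ S'.ncard ≤ S.ncard + 2 := by
  obtain ⟨hS2, hS4⟩ := totalTwoDom_iff.1 hS
  have hrows (k : Fin n) : 1 ≤ (row S k).ncard := by have := hS2 k j; omega
  have hcols (k : Fin m) : 1 ≤ (col S k).ncard := by have := hS2 i k; omega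
  obtain ⟨jw, hjw⟩ := Set.nonempty_of_ncard_ne_zero (Nat.one_le_iff_ne_zero.1 (hrows i))
  obtain ⟨ix, hix⟩ := Set.nonempty_of_ncard_ne_zero (Nat.one_le_iff_ne_zero.1 (hcols j))
  have hcol_jw : 3 ≤ (col S jw).ncard := by have := hS4 i jw hjw; omega
  have hrow_ix : 3 ≤ (row S ix).ncard := by have := hS4 ix j hix; omega
  set S' := ι '' S ∪ {(Fin.last n, jw.castSucc), (ix.castSucc, Fin.last m)} with hS'
  have hsub : ι '' S ⊆ S' := Set.subset_union_left
  have hrow := ncard_row_le_of_image_subset (Fin.castSucc_injective m) hsub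
  have hcol := ncard_col_le_of_image_subset (Fin.castSucc_injective n) hsub
  have hrow' (k : Fin (n + 1)) : 1 ≤ (row S' k).ncard :=
    Fin.lastCases (Nat.one_le_iff_ne_zero.2 (Set.ncard_ne_zero_of_mem (Or.inr (Or.inl rfl))))
      (fun k => (hrows k).trans (hrow k)) k
  have hcol' (k : Fin (m + 1)) : 1 ≤ (col S' k).ncard :=
    Fin.lastCases (Nat.one_le_iff_ne_zero.2 (Set.ncard_ne_zero_of_mem (Or.inr (Or.inr rfl))))
      (fun k => (hcols k).trans (hcol k)) k
  exact ⟨S', totalTwoDom_extension hS' hS (last_mk_notMem_range _)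
    (mk_last_notMem_range _) (fun i j _ => add_le_add (hrow' i) (hcol' j))
    (add_le_add (hrow' _) (hcol_jw.trans (hcol jw)))
    (add_le_add (hrow_ix.trans (hrow ix)) (hcol' _))⟩

theorem exists_totalTwoDom_succ_succ (hn : 0 < n) (hm : 0 < m)
    (hS : TotalTwoDom (K n □ K m) S) :
    ∃ S' : Set (Fin (n + 1) × Fin (m + 1)),
      TotalTwoDom (K (n + 1) □ K (m + 1)) S' ∧ S'.ncard ≤ S.ncard + 2 := by
  by_cases hrow : ∀ i, 2 ≤ (row S i).ncard
  · exact exists_extension_of_forall_two_le_ncard_row hn hS hrow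
  by_cases hcol : ∀ j, 2 ≤ (col S j).ncard
  · obtain ⟨S', hS', hcard⟩ := exists_extension_of_forall_two_le_ncard_row hm
      (totalTwoDom_preimage_swap_iff.2 hS) hcol
    refine ⟨Prod.swap ⁻¹' S', totalTwoDom_preimage_swap_iff.2 hS', ?_⟩
    rwa [ncard_preimage_swap, ← ncard_preimage_swap S]
  push Not at hrow hcol
  obtain ⟨i, hi⟩ := hrow
  obtain ⟨j, hj⟩ := hcol
  exact exists_extension_of_ncard_row_le_one_of_ncard_col_le_one hS
    (Nat.le_of_lt_succ hi) (Nat.le_of_lt_succ hj)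

end Extension

section Deletion

variable {n m : ℕ} (S : Set (Fin (n + 1) × Fin (m + 1))) (i₀ : Fin (n + 1)) (j₀ : Fin (m + 1))

open scoped Classical in
theorem ncard_row_preimage_succAbove_add_ite (i : Fin n) :
    (row (Prod.map i₀.succAbove j₀.succAbove ⁻¹' S) i).ncard
      + (if (i₀.succAbove i, j₀) ∈ S then 1 else 0) = (row S (i₀.succAbove i)).ncard :=
  Fin.ncard_preimage_succAbove_add_ite j₀ (row S (i₀.succAbove i))

open scoped Classical in
theorem ncard_col_preimage_succAbove_add_ite (j : Fin m) :
    (col (Prod.map i₀.succAbove j₀.succAbove ⁻¹' S) j).ncard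
      + (if (i₀, j₀.succAbove j) ∈ S then 1 else 0) = (col S (j₀.succAbove j)).ncard :=
  Fin.ncard_preimage_succAbove_add_ite i₀ (col S (j₀.succAbove j))

theorem ncard_preimage_succAbove_add_ncard_col_le :
    (Prod.map i₀.succAbove j₀.succAbove ⁻¹' S).ncard + (col S j₀).ncard ≤ S.ncard := by
  rw [ncard_eq_sum_ncard_col S, Fin.sum_univ_succAbove _ j₀, ncard_eq_sum_ncard_col, add_comm]
  gcongr with j
  have := ncard_col_preimage_succAbove_add_ite S i₀ j₀ j
  split_ifs at this <;> omega

end Deletion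

section Collapse

variable {n m : ℕ} {S : Set (Fin (n + 1) × Fin (m + 1))} {i₀ : Fin (n + 1)} {j₀ : Fin (m + 1)}
  {j₁ : Fin m}

def collapse (S : Set (Fin (n + 1) × Fin (m + 1))) (i₀ : Fin (n + 1)) (j₀ : Fin (m + 1))
    (j₁ : Fin m) : Set (Fin n × Fin m) :=
  Prod.map i₀.succAbove j₀.succAbove ⁻¹' S ∪ (i₀.succAbove ⁻¹' col S j₀) ×ˢ {j₁}

theorem ncard_collapse_lt (h : (i₀, j₀) ∈ S) : (collapse S i₀ j₀ j₁).ncard < S.ncard := by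
  have hZ := Fin.ncard_preimage_succAbove_add_ite i₀ (col S j₀)
  rw [if_pos (show i₀ ∈ col S j₀ from h)] at hZ
  have hT := ncard_preimage_succAbove_add_ncard_col_le S i₀ j₀
  calc (collapse S i₀ j₀ j₁).ncard
      ≤ (Prod.map i₀.succAbove j₀.succAbove ⁻¹' S).ncard
        + ((i₀.succAbove ⁻¹' col S j₀) ×ˢ ({j₁} : Set (Fin m))).ncard := Set.ncard_union_le _ _
    _ < S.ncard := by
      rw [Set.ncard_prod, Set.ncard_singleton, mul_one]
      omega

theorem ncard_row_le_ncard_row_collapse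
    (hfree : ∀ i, (i₀.succAbove i, j₀) ∈ S → (i₀.succAbove i, j₀.succAbove j₁) ∉ S)
    (i : Fin n) : (row S (i₀.succAbove i)).ncard ≤ (row (collapse S i₀ j₀ j₁) i).ncard := by
  have h := ncard_row_preimage_succAbove_add_ite S i₀ j₀ i
  have hsub : row (Prod.map i₀.succAbove j₀.succAbove ⁻¹' S) i ⊆ row (collapse S i₀ j₀ j₁) i :=
    fun _ hj => Or.inl hj
  split_ifs at h with hi
  · have hj₁ : j₁ ∉ row (Prod.map i₀.succAbove j₀.succAbove ⁻¹' S) i := hfree i hi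
    rw [← h, ← Set.ncard_insert_of_notMem hj₁]
    exact Set.ncard_le_ncard (Set.insert_subset (Or.inr ⟨hi, rfl⟩) hsub)
  · rw [← h, add_zero]
    exact Set.ncard_le_ncard hsub

theorem ncard_col_preimage_succAbove_of_row_eq_singleton (hrow₀ : row S i₀ = {j₀}) (j : Fin m) :
    (col (Prod.map i₀.succAbove j₀.succAbove ⁻¹' S) j).ncard = (col S (j₀.succAbove j)).ncard := by
  have hnot : (i₀, j₀.succAbove j) ∉ S := fun hmem => by
    have : j₀.succAbove j ∈ row S i₀ := hmem
    rw [hrow₀] at this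
    exact Fin.succAbove_ne j₀ j this
  simpa [hnot] using ncard_col_preimage_succAbove_add_ite S i₀ j₀ j

theorem ncard_col_le_ncard_col_collapse (hrow₀ : row S i₀ = {j₀}) (j : Fin m) :
    (col S (j₀.succAbove j)).ncard ≤ (col (collapse S i₀ j₀ j₁) j).ncard := by
  rw [← ncard_col_preimage_succAbove_of_row_eq_singleton hrow₀]
  exact Set.ncard_le_ncard fun _ hi => Or.inl hi

theorem ncard_col_add_ncard_le_ncard_col_collapse (hrow₀ : row S i₀ = {j₀})
    (hfree : ∀ i, (i₀.succAbove i, j₀) ∈ S → (i₀.succAbove i, j₀.succAbove j₁) ∉ S) :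
    (col S (j₀.succAbove j₁)).ncard + (i₀.succAbove ⁻¹' col S j₀).ncard
      ≤ (col (collapse S i₀ j₀ j₁) j₁).ncard := by
  have hdisj : Disjoint (col (Prod.map i₀.succAbove j₀.succAbove ⁻¹' S) j₁)
      (i₀.succAbove ⁻¹' col S j₀) :=
    Set.disjoint_right.2 fun i hi => hfree i hi
  rw [← ncard_col_preimage_succAbove_of_row_eq_singleton hrow₀, ← Set.ncard_union_eq hdisj]
  exact Set.ncard_le_ncard (Set.union_subset (fun _ hi => Or.inl hi) fun _ hi => Or.inr ⟨hi, rfl⟩)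

theorem totalTwoDom_collapse (hS : TotalTwoDom (K (n + 1) □ K (m + 1)) S)
    (hrow₀ : row S i₀ = {j₀})
    (hfree : ∀ i, (i₀.succAbove i, j₀) ∈ S → (i₀.succAbove i, j₀.succAbove j₁) ∉ S) :
    TotalTwoDom (K n □ K m) (collapse S i₀ j₀ j₁) := by
  obtain ⟨h2, h4⟩ := totalTwoDom_iff.1 hS
  have hrow := ncard_row_le_ncard_row_collapse hfree
  have hcol := ncard_col_le_ncard_col_collapse (j₁ := j₁) hrow₀
  have hZ : 2 ≤ (i₀.succAbove ⁻¹' col S j₀).ncard := by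
    have h₀ : (i₀, j₀) ∈ S := show j₀ ∈ row S i₀ from hrow₀ ▸ rfl
    have := Fin.ncard_preimage_succAbove_add_ite i₀ (col S j₀)
    rw [if_pos (show i₀ ∈ col S j₀ from h₀)] at this
    have := h4 i₀ j₀ h₀
    rw [hrow₀, Set.ncard_singleton] at this
    omega
  refine totalTwoDom_iff.2
    ⟨fun i j => (h2 _ _).trans (add_le_add (hrow i) (hcol j)), fun i j hij => ?_⟩
  rcases hij with hij | ⟨hi, rfl : j = j₁⟩
  · exact (h4 _ _ hij).trans (add_le_add (hrow i) (hcol j))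
  · have := h2 (i₀.succAbove i) (j₀.succAbove j)
    have := ncard_col_add_ncard_le_ncard_col_collapse hrow₀ hfree
    have := hrow i
    omega

end Collapse

section LowerBound

variable {n m : ℕ}

theorem add_le_ncard_of_row_nonempty_of_col_meets {a : ℕ} {S : Set (Fin a × Fin (m + 1))}
    (j₀ : Fin (m + 1)) (hrow : ∀ i, (row S i).Nonempty)
    (hcol : ∀ j, ∃ i, (i, j₀) ∈ S ∧ (i, j₀.succAbove j) ∈ S) : a + m ≤ S.ncard := by
  classical
  choose r hr using hrow
  choose g hg using hcol
  -- One cell per row, in column `j₀` when possible, and one cell per other column, in a row that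
  -- meets `j₀`: these are all distinct.
  let F : Fin a ⊕ Fin m → Fin a × Fin (m + 1) :=
    Sum.elim (fun i => (i, if (i, j₀) ∈ S then j₀ else r i)) (fun j => (g j, j₀.succAbove j))
  have hF : Function.Injective F := by
    refine Function.Injective.sumElim (fun i i' h => congrArg Prod.fst h)
      (fun j j' h => Fin.succAbove_right_injective (congrArg Prod.snd h)) fun i j h => ?_
    obtain ⟨rfl, h⟩ := Prod.mk.inj h
    rw [if_pos (hg j).1] at h
    exact Fin.succAbove_ne j₀ j h.symm
  have hrange : Set.range F ⊆ S := by
    rintro _ ⟨i | j, rfl⟩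
    · dsimp only [F, Sum.elim_inl]
      split_ifs with h
      exacts [h, hr i]
    · exact (hg j).2
  calc a + m = (Set.range F).ncard := by simp [Set.ncard_range_of_injective hF]
    _ ≤ S.ncard := Set.ncard_le_ncard hrange

variable {S : Set (Fin (n + 1) × Fin (m + 1))}

theorem exists_totalTwoDom_ncard_lt_of_ncard_le (hS : TotalTwoDom (K (n + 1) □ K (m + 1)) S)
    (hn : S.ncard ≤ 2 * n) (hm : S.ncard ≤ 2 * m) :
    ∃ U : Set (Fin n × Fin m), TotalTwoDom (K n □ K m) U ∧ U.ncard < S.ncard := by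
  obtain ⟨h2, -⟩ := totalTwoDom_iff.1 hS
  have hrows (i : Fin (n + 1)) : (row S i).Nonempty := by
    by_contra he
    rw [Set.not_nonempty_iff_eq_empty] at he
    have := mul_le_ncard_of_forall_le_ncard_col (S := S) (d := 2) fun j => by
      simpa [he] using h2 i j
    rw [Fintype.card_fin] at this
    omega
  obtain ⟨i₀, hi₀⟩ : ∃ i, (row S i).ncard = 1 := by
    by_contra! h
    have := mul_le_ncard_of_forall_le_ncard_row (S := S) (d := 2) fun i => by
      have := Set.ncard_ne_zero_of_mem (hrows i).some_mem
      have := h i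
      omega
    rw [Fintype.card_fin] at this
    omega
  obtain ⟨j₀, hj₀⟩ := Set.ncard_eq_one.1 hi₀
  obtain ⟨j₁, hj₁⟩ :
      ∃ j₁, ∀ i, (i₀.succAbove i, j₀) ∈ S → (i₀.succAbove i, j₀.succAbove j₁) ∉ S := by
    by_contra! h
    have := add_le_ncard_of_row_nonempty_of_col_meets j₀ hrows fun j =>
      let ⟨i, hi⟩ := h j
      ⟨_, hi⟩
    omega
  exact ⟨collapse S i₀ j₀ j₁, totalTwoDom_collapse hS hj₀ hj₁,
    ncard_collapse_lt (show j₀ ∈ row S i₀ from hj₀ ▸ rfl)⟩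

theorem exists_totalTwoDom_ncard_lt (hn : 2 ≤ n) (hm : 2 ≤ m)
    (hS : TotalTwoDom (K (n + 1) □ K (m + 1)) S) :
    ∃ U : Set (Fin n × Fin m), TotalTwoDom (K n □ K m) U ∧ U.ncard < S.ncard := by
  by_cases hlt : 2 * n < S.ncard
  · obtain ⟨U, hU, hcard⟩ := exists_totalTwoDom_ncard_eq hn hm
    exact ⟨U, hU, hcard ▸ hlt⟩
  by_cases hlt' : 2 * m < S.ncard
  · obtain ⟨U, hU, hcard⟩ := exists_totalTwoDom_ncard_eq hm hn
    exact ⟨Prod.swap ⁻¹' U, totalTwoDom_preimage_swap_iff.2 hU,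
      ((ncard_preimage_swap U).trans hcard) ▸ hlt'⟩
  exact exists_totalTwoDom_ncard_lt_of_ncard_le hS (by omega) (by omega)

end LowerBound

end Rook

theorem stmt_16 (n m : ℕ) (hn : 2 ≤ n) (hm : 2 ≤ m) :
    gamma2t (K n □ K m) + 1 ≤ gamma2t (K (n + 1) □ K (m + 1)) ∧
    gamma2t (K (n + 1) □ K (m + 1)) ≤ gamma2t (K n □ K m) + 2 := by
  have hex {a b : ℕ} (ha : 2 ≤ a) (hb : 2 ≤ b) : ∃ S, TotalTwoDom (K a □ K b) S :=
    (Rook.exists_totalTwoDom_ncard_eq ha hb).imp fun _ h => h.1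
  obtain ⟨S, hS, hSγ⟩ := exists_totalTwoDom_ncard_eq_gamma2t (hex hn hm)
  obtain ⟨S', hS', hS'γ⟩ :=
    exists_totalTwoDom_ncard_eq_gamma2t (hex (a := n + 1) (b := m + 1) (by omega) (by omega))
  obtain ⟨U, hU, hUS'⟩ := Rook.exists_totalTwoDom_ncard_lt hn hm hS'
  obtain ⟨U', hU', hU'S⟩ := Rook.exists_totalTwoDom_succ_succ (by omega) (by omega) hS
  have := gamma2t_le hU
  have := gamma2t_le hU'
  omega
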